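/- Let T(Γ,ρ;Υ) be a generalized truncation with natural partition P_Γ, and let G̃ be a subgroup of Aut(T(Γ,ρ;Υ)) leaving P_Γ invariant (i.e., every element of G̃ permutes the parts of P_Γ). Then the map sending each g̃ ∈ G̃ to the permutation g of V(Γ) defined by (V(Γ̃_u))^{g̃} = V(Γ̃_{u^g}) is an injective group homomorphism from G̃ into Aut(Γ); in particular, G̃ is isomorphic to a subgroup of Aut(Γ). -/

import Mathlib

/-!
Since `G̃` maps parts of `P_Γ` to parts, each `g̃` induces a map `u ↦ u^g` on `V(Γ)`, and
composition in `G̃` becomes composition of induced maps, so `g̃ ↦ g` is a homomorphism into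
`Sym(V(Γ))`. Edges between distinct parts are exactly the blue edges, which correspond to edges
of `Γ`; hence `g` is an automorphism of `Γ`. If `g` is trivial, `g̃` fixes every part, and the
blue edge at `(u, v_i)` goes to the part of the neighbour `w` with `ρ(u, w) = i`; as `g̃` fixes
that part too, the blue-edge labels force `g̃` to fix `(u, v_i)`.
-/

open SimpleGraph

variable {V W : Type*}

/-- The generalized truncation `T(Γ,ρ;Υ)` of a graph `Γ` by a graph `Υ`,
with respect to a labeling `ρ` of the darts of `Γ` by vertices of `Υ`. -/
def trunc (Γ : SimpleGraph V) (Υ : SimpleGraph W)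
    (ρ : ∀ u w : V, Γ.Adj u w → W) : SimpleGraph (V × W) where
  Adj x y := (x.1 = y.1 ∧ Υ.Adj x.2 y.2) ∨
    (∃ h : Γ.Adj x.1 y.1, x.2 = ρ x.1 y.1 h ∧ y.2 = ρ y.1 x.1 h.symm)
  symm := by
    constructor
    rintro ⟨u, i⟩ ⟨w, j⟩ (⟨h1, h2⟩ | ⟨h, h1, h2⟩)
    · exact Or.inl ⟨h1.symm, h2.symm⟩
    · exact Or.inr ⟨h.symm, h2, h1⟩
  loopless := by
    constructor
    rintro ⟨u, i⟩ (⟨_, h⟩ | ⟨h, _⟩)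
    · exact Υ.loopless.irrefl _ h
    · exact Γ.loopless.irrefl _ h

/-- `ρ` is a vertex-neighborhood labeling of `Γ`: for every vertex `u`, the restriction
of `ρ` to the darts emanating from `u` is a bijection onto the vertex set of `Υ`. -/
def IsVNLabeling (Γ : SimpleGraph V) (ρ : ∀ u w : V, Γ.Adj u w → W) : Prop :=
  ∀ u : V, ∀ i : W, ∃! w : V, ∃ h : Γ.Adj u w, ρ u w h = i

/-- A permutation of the vertices is an automorphism of the graph. -/
def IsAut (Γ : SimpleGraph V) (π : Equiv.Perm V) : Prop :=
  ∀ a b : V, Γ.Adj (π a) (π b) ↔ Γ.Adj a b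

/-- The automorphism group of a graph, as a subgroup of the symmetric group. -/
def autG (Γ : SimpleGraph V) : Subgroup (Equiv.Perm V) where
  carrier := {π | IsAut Γ π}
  one_mem' := by intro a b; rfl
  mul_mem' := by
    intro f g hf hg a b
    exact (hf (g a) (g b)).trans (hg a b)
  inv_mem' := by
    intro f hf a b
    conv_rhs => rw [← f.apply_symm_apply a, ← f.apply_symm_apply b]
    exact (hf _ _).symm

section InducedPerm

def MapsFibers (g : Equiv.Perm (V × W)) : Prop :=
  ∀ u : V, ∃ u' : V, ∀ i : W, (g (u, i)).1 = u'

variable [Nonempty W]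

noncomputable def inducedMap (g : Equiv.Perm (V × W)) (u : V) : V :=
  (g (u, Classical.arbitrary W)).1

theorem MapsFibers.fst_apply {g : Equiv.Perm (V × W)} (hg : MapsFibers g) (u : V) (i : W) :
    (g (u, i)).1 = inducedMap g u := by
  obtain ⟨u', hu'⟩ := hg u
  rw [inducedMap, hu', hu']

theorem MapsFibers.inducedMap_mul {g : Equiv.Perm (V × W)} (hg : MapsFibers g)
    (h : Equiv.Perm (V × W)) : inducedMap (g * h) = inducedMap g ∘ inducedMap h := by
  funext u
  exact hg.fst_apply (h (u, _)).1 (h (u, _)).2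

noncomputable def inducedHom (G : Subgroup (Equiv.Perm (V × W)))
    (hG : ∀ g ∈ G, MapsFibers g) : G →* Equiv.Perm V :=
  Equiv.Perm.equivUnitsEnd.symm.toMonoidHom.comp
    (MonoidHom.toHomUnits
      { toFun := fun g => inducedMap (g : Equiv.Perm (V × W))
        map_one' := rfl
        map_mul' := fun g h => (hG g g.2).inducedMap_mul h })

end InducedPerm

section Truncation

variable {Γ : SimpleGraph V} {Υ : SimpleGraph W} {ρ : ∀ u w : V, Γ.Adj u w → W}

theorem trunc_adj_dart {u w : V} (h : Γ.Adj u w) :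
    (trunc Γ Υ ρ).Adj (u, ρ u w h) (w, ρ w u h.symm) :=
  Or.inr ⟨h, rfl, rfl⟩

theorem trunc_adj_of_fst_ne {x y : V × W} (hxy : (trunc Γ Υ ρ).Adj x y) (hne : x.1 ≠ y.1) :
    ∃ h : Γ.Adj x.1 y.1, x.2 = ρ x.1 y.1 h ∧ y.2 = ρ y.1 x.1 h.symm :=
  hxy.resolve_left fun h => hne h.1

theorem mem_autG_of_adj_map {π : Equiv.Perm V}
    (hπ : ∀ a b, Γ.Adj a b → Γ.Adj (π a) (π b))
    (hπinv : ∀ a b, Γ.Adj a b → Γ.Adj (π⁻¹ a) (π⁻¹ b)) : π ∈ autG Γ := by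
  intro a b
  refine ⟨fun h => ?_, hπ a b⟩
  simpa using hπinv _ _ h

variable [Nonempty W] {g : Equiv.Perm (V × W)}

theorem adj_inducedMap (hg : g ∈ autG (trunc Γ Υ ρ)) (hfib : MapsFibers g)
    (hinj : Function.Injective (inducedMap g)) {a b : V} (hab : Γ.Adj a b) :
    Γ.Adj (inducedMap g a) (inducedMap g b) := by
  have hne : inducedMap g a ≠ inducedMap g b := hinj.ne hab.ne
  have hadj := (hg _ _).mpr (trunc_adj_dart (Υ := Υ) hab)
  rw [← hfib.fst_apply a, ← hfib.fst_apply b] at hne ⊢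
  exact (trunc_adj_of_fst_ne hadj hne).1

theorem eq_one_of_inducedMap_eq_id (hρ : ∀ u i, ∃ w, ∃ h : Γ.Adj u w, ρ u w h = i)
    (hg : g ∈ autG (trunc Γ Υ ρ)) (hfib : MapsFibers g) (hid : inducedMap g = id) : g = 1 := by
  have hfst : ∀ u i, (g (u, i)).1 = u := fun u i => by rw [hfib.fst_apply, hid, id]
  ext ⟨u, i⟩ : 1
  obtain ⟨w, h, rfl⟩ := hρ u i
  have hadj := (hg _ _).mpr (trunc_adj_dart (Υ := Υ) h)
  have hne : (g (u, ρ u w h)).1 ≠ (g (w, ρ w u h.symm)).1 := by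
    rw [hfst, hfst]; exact h.ne
  obtain ⟨_, hlabel, -⟩ := trunc_adj_of_fst_ne hadj hne
  rw [Equiv.Perm.one_apply]
  exact Prod.ext (hfst u _) (by simpa only [hfst] using hlabel)

end Truncation

theorem stmt2_general {V W : Type*} (Γ : SimpleGraph V) (Υ : SimpleGraph W)
    (ρ : ∀ u w : V, Γ.Adj u w → W) (hρ : IsVNLabeling Γ ρ)
    (Gt : Subgroup (Equiv.Perm (V × W))) (hGt : Gt ≤ autG (trunc Γ Υ ρ))
    (hinv : ∀ gt ∈ Gt, ∀ u : V, ∃ u' : V, ∀ i : W, (gt (u, i)).1 = u') :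
    ∃ F : Gt →* Equiv.Perm V, Function.Injective F ∧
      (∀ gt : Gt, (F gt : Equiv.Perm V) ∈ autG Γ) ∧
      (∀ (gt : Gt) (u : V) (i : W), ((gt : Equiv.Perm (V × W)) (u, i)).1 = F gt u) := by
  rcases isEmpty_or_nonempty W with hW | hW
  · exact ⟨1, fun _ _ _ => Subsingleton.elim _ _, fun _ => one_mem _, fun _ _ i => isEmptyElim i⟩
  set F := inducedHom Gt hinv
  have hF : Function.Injective F := by
    refine (injective_iff_map_eq_one F).mpr fun g hg => Subtype.ext ?_
    exact eq_one_of_inducedMap_eq_id (fun u i => (hρ u i).exists) (hGt g.2) (hinv g g.2)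
      (congrArg DFunLike.coe hg)
  refine ⟨F, hF, fun g => mem_autG_of_adj_map ?_ ?_, fun g => MapsFibers.fst_apply (hinv g g.2)⟩
  · exact fun a b => adj_inducedMap (hGt g.2) (hinv g g.2) (F g).injective
  · rw [← map_inv]
    exact fun a b => adj_inducedMap (hGt g⁻¹.2) (hinv _ g⁻¹.2) (F g⁻¹).injective

/-- If `Gt` is a subgroup of the automorphism group of a generalized
truncation `T(Γ,ρ;Υ)` leaving the natural partition invariant, then the map sending each
`gt ∈ Gt` to the induced permutation `g` of `V(Γ)` (determined by
`(V(Γ̃_u))^{gt} = V(Γ̃_{u^g})`) is an injective group homomorphism of `Gt` into `Aut(Γ)`;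
in particular `Gt` is isomorphic to a subgroup of `Aut(Γ)`. -/
theorem stmt2 {V W : Type*} [Fintype V] [Fintype W] [DecidableEq V] [DecidableEq W]
    {k : ℕ} (Γ : SimpleGraph V) [DecidableRel Γ.Adj] (Υ : SimpleGraph W)
    (hreg : Γ.IsRegularOfDegree k) (hcard : Fintype.card W = k)
    (ρ : ∀ u w : V, Γ.Adj u w → W) (hρ : IsVNLabeling Γ ρ)
    (Gt : Subgroup (Equiv.Perm (V × W))) (hGt : Gt ≤ autG (trunc Γ Υ ρ))
    (hinv : ∀ gt ∈ Gt, ∀ u : V, ∃ u' : V, ∀ i : W, (gt (u, i)).1 = u') :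
    ∃ F : Gt →* Equiv.Perm V, Function.Injective F ∧
      (∀ gt : Gt, (F gt : Equiv.Perm V) ∈ autG Γ) ∧
      (∀ (gt : Gt) (u : V) (i : W), ((gt : Equiv.Perm (V × W)) (u, i)).1 = F gt u) :=
  stmt2_general Γ Υ ρ hρ Gt hGt hinv
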